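/- arXiv:2405.07636 — 5 statements merged into one kernel-verified Lean document; each statement's English description precedes it below -/
import Mathlib

section
/- Let f : ℝ → ℝ and g, g̃ : ℝ → ℝ be real analytic functions with g(0) = g̃(0) = 0. If f(x + g(y)) = f(x + g̃(y)) for all x, y ∈ ℝ, then either f is constant or g = g̃. -/
/-!
Put `h := g - g'`. For every `y`, `h y` is a period of `f`, since
`f (z + h y) = f ((z - g' y) + g y) = f ((z - g' y) + g' y) = f z`.
If `g ≠ g'`, the range of the continuous function `h` is connected and contains `0 = h 0` and some
`h y₀ ≠ 0`, hence the whole interval between them. The additive group of periods of `f` then contains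
a neighbourhood of `0`, so it is open, hence also closed, hence all of `ℝ` because `ℝ` is connected;
a function having every real number as a period is constant.
-/

open Set Function Topology

def periodSubgroup {G α : Type*} [AddGroup G] (f : G → α) : AddSubgroup G where
  carrier := {c | Periodic f c}
  zero_mem' := fun x => by rw [add_zero]
  add_mem' := Periodic.add_period
  neg_mem' := Periodic.neg

theorem mem_periodSubgroup {G α : Type*} [AddGroup G] {f : G → α} {c : G} :
    c ∈ periodSubgroup f ↔ Periodic f c :=
  Iff.rfl

theorem periodSubgroup_eq_top_iff {G α : Type*} [AddGroup G] {f : G → α} :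
    periodSubgroup f = ⊤ ↔ ∃ a, ∀ x, f x = a := by
  constructor
  · intro h
    refine ⟨f 0, fun x => ?_⟩
    have hx : Periodic f x := mem_periodSubgroup.1 (h ▸ AddSubgroup.mem_top x)
    simpa only [zero_add] using hx 0
  · rintro ⟨a, ha⟩
    exact eq_top_iff.2 fun c _ x => by rw [ha, ha]

theorem AddSubgroup.eq_top_of_mem_nhds_zero {G : Type*} [AddGroup G] [TopologicalSpace G]
    [SeparatelyContinuousAdd G] [PreconnectedSpace G] (H : AddSubgroup G)
    (hH : (H : Set G) ∈ 𝓝 0) : H = ⊤ := by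
  have hopen := H.isOpen_of_mem_nhds hH
  have hclopen : IsClopen (H : Set G) := ⟨H.isClosed_of_isOpen hopen, hopen⟩
  exact SetLike.coe_injective <| hclopen.eq_univ ⟨0, H.zero_mem⟩

theorem AddSubgroup.eq_top_of_uIcc_subset (H : AddSubgroup ℝ) {a : ℝ} (ha : a ≠ 0)
    (hH : uIcc 0 a ⊆ H) : H = ⊤ := by
  refine H.eq_top_of_mem_nhds_zero (Filter.mem_of_superset (Icc_mem_nhds
    (neg_lt_zero.2 (abs_pos.2 ha)) (abs_pos.2 ha)) fun x hx => ?_)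
  suffices x ∈ uIcc 0 a ∨ -x ∈ uIcc 0 a by
    rcases this with h | h
    · exact hH h
    · simpa using H.neg_mem (hH h)
  rw [mem_Icc] at hx
  simp only [mem_uIcc]
  cases abs_cases a <;> cases le_total 0 x <;> grind

theorem Function.Periodic.sub_of_forall_add_eq {G α β : Type*} [AddCommGroup G] {f : G → α}
    {g g' : β → G} (heq : ∀ x y, f (x + g y) = f (x + g' y)) (y : β) :
    Periodic f (g y - g' y) := fun z => by
  rw [show z + (g y - g' y) = z - g' y + g y by abel, heq, sub_add_cancel]

theorem stmt_0_general (f g g' : ℝ → ℝ)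
    (hg : ∀ x, AnalyticAt ℝ g x)
    (hg' : ∀ x, AnalyticAt ℝ g' x)
    (hg0 : g 0 = 0) (hg'0 : g' 0 = 0)
    (heq : ∀ x y : ℝ, f (x + g y) = f (x + g' y)) :
    (∃ c : ℝ, ∀ x, f x = c) ∨ g = g' := by
  refine or_iff_not_imp_right.2 fun hne => periodSubgroup_eq_top_iff.1 ?_
  obtain ⟨y₀, hy₀⟩ : ∃ y, g y - g' y ≠ 0 := by
    by_contra! h
    exact hne (funext fun y => sub_eq_zero.1 (h y))
  have hcont : Continuous (g - g') :=
    continuous_iff_continuousAt.2 fun x => (hg x).continuousAt.sub (hg' x).continuousAt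
  refine (periodSubgroup f).eq_top_of_uIcc_subset hy₀ ?_
  calc uIcc 0 (g y₀ - g' y₀) ⊆ range (g - g') :=
        (isPreconnected_range hcont).ordConnected.uIcc_subset ⟨0, by simp [hg0, hg'0]⟩ ⟨y₀, rfl⟩
    _ ⊆ periodSubgroup f := by
        rintro _ ⟨y, rfl⟩
        exact Periodic.sub_of_forall_add_eq heq y

theorem stmt_0 (f g g' : ℝ → ℝ)
    (hf : ∀ x, AnalyticAt ℝ f x) (hg : ∀ x, AnalyticAt ℝ g x)
    (hg' : ∀ x, AnalyticAt ℝ g' x)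
    (hg0 : g 0 = 0) (hg'0 : g' 0 = 0)
    (heq : ∀ x y : ℝ, f (x + g y) = f (x + g' y)) :
    (∃ c : ℝ, ∀ x, f x = c) ∨ g = g' :=
  stmt_0_general f g g' hg hg' hg0 hg'0 heq
end

section
/- Let f : ℝ → ℝ and g, g̃ : ℝ → ℝ be real analytic functions with f(0) = g(0) = g̃(0) = 0 and f not identically zero. If f(x + g(y)) = f(x + g̃(y)) for all x, y ∈ ℝ, then g = g̃. -/
/-!
Every difference `g y - g' y` is a period of `f`. Since `g - g'` is continuous and vanishes at `0`,
a value `t ≠ 0` would make every number between `0` and `t` a period, by the intermediate value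
theorem. A subgroup of `ℝ` containing a nondegenerate interval is open, hence clopen, hence all of
`ℝ`; then `f` is constant, equal to `f 0 = 0`.
-/

open Set Topology

namespace Function

variable {α β : Type*}

def periods [AddGroup α] (f : α → β) : AddSubgroup α where
  carrier := {c | Periodic f c}
  add_mem' := Periodic.add_period
  zero_mem' := periodic_with_period_zero f
  neg_mem' := Periodic.neg

theorem mem_periods [AddGroup α] {f : α → β} {c : α} : c ∈ periods f ↔ Periodic f c :=
  Iff.rfl

theorem sub_mem_periods_of_forall_add_eq [AddCommGroup α] {f : α → β} {a b : α}
    (h : ∀ x, f (x + a) = f (x + b)) : a - b ∈ periods f := fun x => by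
  simpa [add_sub_assoc', sub_add_eq_add_sub] using h (x - b)

theorem apply_eq_apply_zero_of_periods_eq_top [AddGroup α] {f : α → β} (h : periods f = ⊤)
    (x : α) : f x = f 0 :=
  (mem_periods.1 (h ▸ AddSubgroup.mem_top x)).eq

end Function

theorem AddSubgroup.eq_top_of_mem_nhds {G : Type*} [AddGroup G] [TopologicalSpace G]
    [SeparatelyContinuousAdd G] [ConnectedSpace G] (H : AddSubgroup G) {g : G}
    (hg : (H : Set G) ∈ 𝓝 g) : H = ⊤ := by
  have hopen := H.isOpen_of_mem_nhds hg
  have hclopen : IsClopen (H : Set G) := ⟨H.isClosed_of_isOpen hopen, hopen⟩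
  exact SetLike.coe_injective ((hclopen.eq_univ ⟨0, H.zero_mem⟩).trans coe_top.symm)

theorem AddSubgroup.eq_top_of_uIcc_subset_s1 {G : Type*} [AddCommGroup G] [LinearOrder G]
    [IsOrderedAddMonoid G] [TopologicalSpace G] [OrderTopology G] [DenselyOrdered G]
    [ConnectedSpace G] {H : AddSubgroup G} {a b : G} (hab : a ≠ b) (h : uIcc a b ⊆ H) :
    H = ⊤ := by
  obtain ⟨c, hac, hcb⟩ := exists_between (min_lt_max.2 hab)
  exact H.eq_top_of_mem_nhds (Filter.mem_of_superset (Icc_mem_nhds hac hcb) h)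

theorem stmt_1_general (f g g' : ℝ → ℝ)
    (hg : ∀ x, AnalyticAt ℝ g x)
    (hg' : ∀ x, AnalyticAt ℝ g' x)
    (hf0 : f 0 = 0) (hg0 : g 0 = 0) (hg'0 : g' 0 = 0)
    (hfne : ¬ ∀ x, f x = 0)
    (heq : ∀ x y : ℝ, f (x + g y) = f (x + g' y)) :
    g = g' := by
  have hcont : Continuous (g - g') :=
    AnalyticOnNhd.continuous (fun x _ => (hg x).sub (hg' x))
  have hperiods : range (g - g') ⊆ Function.periods f := by
    rintro _ ⟨y, rfl⟩
    exact Function.sub_mem_periods_of_forall_add_eq (heq · y)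
  have hne_top : Function.periods f ≠ ⊤ := fun h =>
    hfne fun x => (Function.apply_eq_apply_zero_of_periods_eq_top h x).trans hf0
  funext y
  by_contra hy
  refine hne_top (AddSubgroup.eq_top_of_uIcc_subset_s1 (sub_ne_zero.2 hy).symm ?_)
  have h0 : (0 : ℝ) ∈ range (g - g') := ⟨0, by simp [hg0, hg'0]⟩
  exact ((isPreconnected_range hcont).ordConnected.uIcc_subset h0 ⟨y, rfl⟩).trans hperiods

theorem stmt_1 (f g g' : ℝ → ℝ)
    (hf : ∀ x, AnalyticAt ℝ f x) (hg : ∀ x, AnalyticAt ℝ g x)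
    (hg' : ∀ x, AnalyticAt ℝ g' x)
    (hf0 : f 0 = 0) (hg0 : g 0 = 0) (hg'0 : g' 0 = 0)
    (hfne : ¬ ∀ x, f x = 0)
    (heq : ∀ x y : ℝ, f (x + g y) = f (x + g' y)) :
    g = g' :=
  stmt_1_general f g g' hg hg' hf0 hg0 hg'0 hfne heq
end

section
/- In a finite directed acyclic graph, every vertex that is not a source (i.e., has at least one in-neighbor) has at least one in-neighbor j such that the edge (i, j) is the unique directed path from j to i. -/
/-- `l` is a directed path in the digraph with edge relation `E`:
a list of distinct vertices where consecutive vertices are joined by edges. -/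
def IsDiPath {V : Type*} (E : V → V → Prop) (l : List V) : Prop :=
  l.Chain' E ∧ l.Nodup

lemma chain_penult {V : Type*} (E : V → V → Prop) :
    ∀ (l : List V) (j i : V), List.Chain E j l → l.getLast? = some i →
      2 ≤ l.length → ∃ p, Relation.TransGen E j p ∧ E p i := by
  intro l
  induction l with
  | nil => intro j i _ _ h; simp at h
  | cons a t ih =>
    intro j i hc hlast hlen
    match t, hlen with
    | [b], _ =>
      simp [List.getLast?] at hlast
      subst hlast
      rcases hc with _ | _ | ⟨hja, hc⟩
      rcases hc with _ | _ | ⟨hab, _⟩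
      exact ⟨a, Relation.TransGen.single hja, hab⟩
    | b :: c :: t', _ =>
      rcases hc with _ | _ | ⟨hja, hc⟩
      have hlast' : (b :: c :: t').getLast? = some i := by
        rwa [List.getLast?_cons_cons] at hlast
      obtain ⟨p, hp1, hp2⟩ := ih a i hc hlast' (by simp)
      exact ⟨p, Relation.TransGen.head hja hp1, hp2⟩

theorem stmt_5 {V : Type*} [Fintype V] (E : V → V → Prop)
    (hacyclic : ∀ v, ¬ Relation.TransGen E v v)
    (i : V) (hnotsource : ∃ j, E j i) :
    ∃ j, E j i ∧
      ∀ l : List V, IsDiPath E l → l.head? = some j → l.getLast? = some i →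
        l = [j, i] := by
  have hirr : IsIrrefl V (fun a b => Relation.TransGen E b a) := ⟨fun a => hacyclic a⟩
  have htr : IsTrans V (fun a b => Relation.TransGen E b a) :=
    ⟨fun a b c h1 h2 => h2.trans h1⟩
  have hwf := Finite.wellFounded_of_trans_of_irrefl (fun a b => Relation.TransGen E b a)
  obtain ⟨j, hji, hmax⟩ := hwf.has_min {j | E j i} hnotsource
  refine ⟨j, hji, ?_⟩
  rintro l ⟨hch, -⟩ hhead hlast
  rcases l with - | ⟨j', t⟩
  · simp at hhead
  have hj' : j = j' := by symm; simpa using hhead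
  subst hj'
  have hch' : List.Chain E j t := hch
  rcases t with - | ⟨x, t⟩
  · simp at hlast
    subst hlast
    exact absurd (Relation.TransGen.single hji) (hacyclic j)
  rcases t with - | ⟨y, t'⟩
  · simp [List.getLast?] at hlast
    subst hlast
    rfl
  have hlast' : (x :: y :: t').getLast? = some i := by
    rwa [List.getLast?_cons_cons] at hlast
  obtain ⟨p, hp1, hp2⟩ := chain_penult E _ j i hch' hlast' (by simp)
  exact absurd hp1 (hmax p hp2)
end

section
/- Let G be a finite DAG and let i be a vertex with at least two in-neighbors. Then the subgraph of G induced by the set consisting of the in-neighbors of i together with all vertices lying on some directed path between two in-neighbors of i contains a vertex with no outgoing edges within that subgraph; consequently, i has an in-neighbor j whose only directed path to i is the edge (i, j). -/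
lemma chain'_last_rel {V : Type*} (E : V → V → Prop) :
    ∀ (l : List V) (b x : V), l.Chain' E → l.getLast? = some b → x ∈ l →
      x = b ∨ Relation.TransGen E x b := by
  intro l
  induction l with
  | nil => simp
  | cons a t ih =>
    intro b x hc hl hx
    cases t with
    | nil =>
      simp at hl hx
      left; rw [hx, hl]
    | cons c t' =>
      rw [List.Chain', List.isChain_cons_cons] at hc
      rcases List.mem_cons.1 hx with rfl | hx'
      · rcases ih b c hc.2 (by simpa using hl) List.mem_cons_self with rfl | ht
        · exact Or.inr (.single hc.1)
        · exact Or.inr (.head hc.1 ht)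
      · exact ih b x hc.2 (by simpa using hl) hx'

lemma chain'_next {V : Type*} (E : V → V → Prop) :
    ∀ (l : List V) (b x : V), l.Chain' E → l.getLast? = some b → x ∈ l →
      x = b ∨ ∃ y ∈ l, E x y := by
  intro l
  induction l with
  | nil => simp
  | cons a t ih =>
    intro b x hc hl hx
    cases t with
    | nil =>
      simp at hl hx
      left; rw [hx, hl]
    | cons c t' =>
      rw [List.Chain', List.isChain_cons_cons] at hc
      rcases List.mem_cons.1 hx with rfl | hx'
      · exact Or.inr ⟨c, by simp, hc.1⟩
      · rcases ih b x hc.2 (by simpa using hl) hx' with h | ⟨y, hy, hxy⟩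
        · exact Or.inl h
        · exact Or.inr ⟨y, List.mem_cons_of_mem _ hy, hxy⟩

theorem stmt_10 {V : Type*} [Fintype V] (E : V → V → Prop)
    (hacyclic : ∀ v, ¬ Relation.TransGen E v v)
    (i : V) (p q : V) (hp : E p i) (hq : E q i) (hpq : p ≠ q) :
    -- the subgraph induced by the in-neighbors of `i` together with all vertices
    -- lying on a directed path between two in-neighbors of `i`
    (∃ s ∈ ({v | E v i} ∪
        {v | ∃ a b, E a i ∧ E b i ∧ ∃ l : List V, IsDiPath E l ∧
          l.head? = some a ∧ l.getLast? = some b ∧ v ∈ l} : Set V),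
      ∀ w ∈ ({v | E v i} ∪
        {v | ∃ a b, E a i ∧ E b i ∧ ∃ l : List V, IsDiPath E l ∧
          l.head? = some a ∧ l.getLast? = some b ∧ v ∈ l} : Set V), ¬ E s w) ∧
    (∃ j, E j i ∧
      ∀ l : List V, IsDiPath E l → l.head? = some j → l.getLast? = some i →
        l = [j, i]) := by
  set S : Set V := ({v | E v i} ∪
      {v | ∃ a b, E a i ∧ E b i ∧ ∃ l : List V, IsDiPath E l ∧
        l.head? = some a ∧ l.getLast? = some b ∧ v ∈ l} : Set V) with hS
  have hpS : p ∈ S := Or.inl hp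
  -- well-founded relation
  set r : V → V → Prop := fun a b => E b a ∧ a ∈ S ∧ b ∈ S with hr
  have hwf : WellFounded r := by
    have hmono : ∀ {a b}, Relation.TransGen r a b → Relation.TransGen E b a := by
      intro a b h
      have : Relation.TransGen (Function.swap E) a b :=
        Relation.TransGen.mono (r := r) (p := Function.swap E) (fun x y hxy => hxy.1) a b h
      exact Relation.transGen_swap.mp this
    have hT : WellFounded (Relation.TransGen r) := by
      haveI : IsTrans V (Relation.TransGen r) := ⟨fun _ _ _ h1 h2 => h1.trans h2⟩
      haveI : IsIrrefl V (Relation.TransGen r) := ⟨fun a h => hacyclic a (hmono h)⟩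
      exact Finite.wellFounded_of_trans_of_irrefl _
    exact Subrelation.wf (fun h => Relation.TransGen.single h) hT
  obtain ⟨s, hsS, hsmin⟩ := hwf.has_min S ⟨p, hpS⟩
  have hsink : ∀ w ∈ S, ¬ E s w := fun w hw hE => hsmin w hw ⟨hE, hw, hsS⟩
  have hsi : E s i := by
    rcases hsS with h | ⟨a, b, ha, hb, l, ⟨hc, hn⟩, hh, hl, hm⟩
    · exact h
    · rcases chain'_next E l b s hc hl hm with rfl | ⟨y, hy, hsy⟩
      · exact hb
      · exact absurd hsy (hsink y (Or.inr ⟨a, b, ha, hb, l, ⟨hc, hn⟩, hh, hl, hy⟩))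
  refine ⟨⟨s, hsS, hsink⟩, s, hsi, ?_⟩
  rintro l ⟨hc, hn⟩ hh hl
  cases l with
  | nil => simp at hh
  | cons a t =>
    simp only [List.head?_cons, Option.some.injEq] at hh
    subst hh
    cases t with
    | nil =>
      simp only [List.getLast?_singleton, Option.some.injEq] at hl
      exact absurd (Relation.TransGen.single (hl ▸ hsi)) (hacyclic i)
    | cons w t' =>
      rw [List.Chain', List.isChain_cons_cons] at hc
      have hsw : E a w := hc.1
      cases t' with
      | nil =>
        simp only [List.getLast?_cons_cons, List.getLast?_singleton,
          Option.some.injEq] at hl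
        subst hl
        rfl
      | cons x t'' =>
        exfalso
        -- show w ∈ S and contradict the sink property
        set l : List V := a :: w :: x :: t'' with hldef
        have hne : l ≠ [] := by simp [hldef]
        have hgl : l.getLast hne = i := by
          have := List.getLast?_eq_getLast (l := l) hne
          rw [hl] at this
          exact (Option.some.injEq _ _ ▸ this).symm
        have hdecomp : l.dropLast ++ [i] = l := by
          conv_rhs => rw [← List.dropLast_append_getLast hne, hgl]
        have hcl : l.Chain' E := List.isChain_cons_cons.mpr ⟨hc.1, hc.2⟩
        have hc2 : l.dropLast.Chain' E ∧ ∀ c ∈ l.dropLast.getLast?, E c i := by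
          rw [← hdecomp, List.Chain', List.isChain_append] at hcl
          exact ⟨hcl.1, fun c hcmem => hcl.2.2 c hcmem i rfl⟩
        have hdrop : l.dropLast = a :: w :: (x :: t'').dropLast := rfl
        have hdne : l.dropLast ≠ [] := by rw [hdrop]; simp
        set c : V := l.dropLast.getLast hdne with hcdef
        have hcl? : l.dropLast.getLast? = some c :=
          List.getLast?_eq_getLast hdne
        have hci : E c i := hc2.2 c hcl?
        have hwmem : w ∈ l.dropLast := by rw [hdrop]; simp
        have hwS : w ∈ S := Or.inr ⟨a, c, hsi, hci, l.dropLast,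
          ⟨hc2.1, hn.sublist (List.dropLast_sublist l)⟩,
          by rw [hdrop]; rfl, hcl?, hwmem⟩
        exact hsink w hwS hsw
end

section
/- Let f : ℝ → ℝ be a real analytic function whose derivative f' is nonconstant, and let a₁, a₂ : ℝ → ℝ be real analytic with a₁(0) = a₂(0) = 0. If f(x + a₁(y)) − f(x + a₂(y)) does not depend on x (i.e., for all x₁, x₂, y: f(x₁ + a₁(y)) − f(x₁ + a₂(y)) = f(x₂ + a₁(y)) − f(x₂ + a₂(y))), then a₁ = a₂. -/
theorem stmt_14 (f a₁ a₂ : ℝ → ℝ)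
    (hf : ∀ x, AnalyticAt ℝ f x)
    (ha₁ : ∀ x, AnalyticAt ℝ a₁ x) (ha₂ : ∀ x, AnalyticAt ℝ a₂ x)
    (hf' : ¬ ∃ k : ℝ, ∀ x, deriv f x = k)
    (ha₁0 : a₁ 0 = 0) (ha₂0 : a₂ 0 = 0)
    (heq : ∀ x₁ x₂ y : ℝ,
      f (x₁ + a₁ y) - f (x₁ + a₂ y) = f (x₂ + a₁ y) - f (x₂ + a₂ y)) :
    a₁ = a₂ := by
  set g := deriv f with hg
  -- continuity of g
  have hfOn : AnalyticOnNhd ℝ f Set.univ := fun x _ => hf x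
  have hgOn : AnalyticOnNhd ℝ g Set.univ := hfOn.deriv
  have hgc : Continuous g := by
    rw [← continuousOn_univ]
    exact hgOn.continuousOn
  -- continuity of p = a₁ - a₂
  set p : ℝ → ℝ := fun y => a₁ y - a₂ y with hp
  have hpc : Continuous p := by
    have h1 : Continuous a₁ :=
      continuous_iff_continuousAt.mpr fun x => (ha₁ x).continuousAt
    have h2 : Continuous a₂ :=
      continuous_iff_continuousAt.mpr fun x => (ha₂ x).continuousAt
    exact h1.sub h2
  -- each p y is a period of g
  have hper : ∀ y, Function.Periodic g (p y) := by
    intro y s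
    have key : ∀ t : ℝ, g (t + a₁ y) = g (t + a₂ y) := by
      intro t
      have hfun : (fun t : ℝ => f (t + a₁ y)) =
          fun t : ℝ => f (t + a₂ y) + (f (a₁ y) - f (a₂ y)) := by
        funext t
        have := heq t 0 y
        simp only [zero_add] at this
        linarith
      have := congrArg (fun F => deriv F t) hfun
      simp only [deriv_add_const] at this
      rw [deriv_comp_add_const, deriv_comp_add_const] at this
      exact this
    have := key (s - a₂ y)
    simp only [sub_add_cancel] at this
    calc g (s + p y) = g (s - a₂ y + a₁ y) := by show g (s + (a₁ y - a₂ y)) = _; ring_nf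
      _ = g s := this
  -- the subgroup of periods
  set S : AddSubgroup ℝ :=
    { carrier := {c | Function.Periodic g c}
      zero_mem' := by intro x; simp
      add_mem' := fun h1 h2 => h1.add_period h2
      neg_mem' := fun h => h.neg } with hS
  have hmem : ∀ y, p y ∈ S := hper
  rcases S.dense_or_cyclic with hdense | ⟨a, ha⟩
  · -- dense periods ⇒ g constant, contradiction
    exfalso
    apply hf'
    refine ⟨g 0, fun x => ?_⟩
    have : ∀ c ∈ (S : Set ℝ), g c = g 0 := by
      intro c hc
      have := (hc : Function.Periodic g c) 0
      simpa using this
    have heqg : g = fun _ => g 0 :=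
      Continuous.ext_on hdense hgc continuous_const this
    exact congrFun heqg x
  · -- cyclic: S = closure {a}
    have hmult : ∀ c ∈ S, c = 0 ∨ |a| ≤ |c| := by
      intro c hc
      rw [ha, AddSubgroup.mem_closure_singleton] at hc
      obtain ⟨n, hn⟩ := hc
      rcases eq_or_ne n 0 with h0 | h0
      · left; simp [← hn, h0]
      · right
        rw [← hn]
        have : (1 : ℝ) ≤ |(n : ℝ)| := by
          rw [← Int.cast_abs]
          exact_mod_cast Int.one_le_abs (by exact_mod_cast h0)
        calc |a| = 1 * |a| := (one_mul _).symm
          _ ≤ |(n : ℝ)| * |a| := by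
              rcases eq_or_lt_of_le (abs_nonneg a) with h | h
              · simp [← h]
              · exact mul_le_mul_of_nonneg_right this (abs_nonneg a)
          _ = |n • a| := by rw [zsmul_eq_mul, abs_mul]
    -- show p y = 0 for all y
    have hpzero : ∀ y, p y = 0 := by
      intro y
      by_contra hy
      have hay : |a| ≤ |p y| := (hmult _ (hmem y)).resolve_left hy
      have ha0 : a ≠ 0 := by
        intro h
        have := hmem y
        rw [ha, h, AddSubgroup.mem_closure_singleton] at this
        obtain ⟨n, hn⟩ := this
        simp at hn
        exact hy hn.symm
      have hapos : 0 < |a| := abs_pos.mpr ha0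
      -- target value c between 0 and p y with 0 < |c| < |a|
      set c : ℝ := (|a| / 2) * (p y / |p y|) with hc
      have hpyabs : 0 < |p y| := lt_of_lt_of_le hapos hay
      have hcabs : |c| = |a| / 2 := by
        rw [hc, abs_mul, abs_of_pos (by positivity : (0:ℝ) < |a|/2), abs_div, abs_abs,
          div_self (ne_of_gt hpyabs), mul_one]
      have hc_mem : c ∈ Set.uIcc (p 0) (p y) := by
        have hp0 : p 0 = 0 := by simp [hp, ha₁0, ha₂0]
        rw [hp0]
        rcases lt_or_gt_of_ne hy with hneg | hpos
        · -- p y < 0, c = -(|a|/2) * ... ; c negative, c ≥ p y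
          have hcval : c = -(|a| / 2) := by
            rw [hc, abs_of_neg hneg]; field_simp
          rw [Set.mem_uIcc]
          right
          constructor
          · rw [hcval]
            have : |a| / 2 ≤ |p y| := le_trans (by linarith) hay
            rw [abs_of_neg hneg] at this
            linarith
          · rw [hcval]; linarith
        · have hcval : c = |a| / 2 := by
            rw [hc, abs_of_pos hpos]; field_simp
          rw [Set.mem_uIcc]
          left
          constructor
          · rw [hcval]; positivity
          · rw [hcval]
            have : |a| / 2 ≤ |p y| := le_trans (by linarith) hay
            rw [abs_of_pos hpos] at this
            linarith
      obtain ⟨y', _, hy'⟩ := intermediate_value_uIcc (hpc.continuousOn (s := Set.uIcc 0 y)) hc_mem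
      have := hmult _ (hmem y')
      rw [hy'] at this
      rcases this with h | h
      · rw [h] at hcabs; simp at hcabs; linarith
      · rw [hcabs] at h; linarith
    funext y
    have := hpzero y
    simp only [hp] at this
    linarith
end
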